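/- arXiv:2603.19554 — 2 statements merged into one kernel-verified Lean document; each statement's English description precedes it below -/
import Mathlib

section
/- If the set H₁ of Perron numbers of Parry order exactly 1 has no accumulation point in ℝ, then for every integer n ≥ 1 the set H_n of Perron numbers of Parry order exactly n has no accumulation point in ℝ. -/
/-- The β-transformation `x ↦ βx - ⌊βx⌋`. -/
noncomputable def betaT (β : ℝ) (x : ℝ) : ℝ := β * x - ⌊β * x⌋

/-- `β` is a Parry number: `β > 1` and the forward orbit of `1` under the
β-transformation is finite. -/
def IsParry (β : ℝ) : Prop :=
  1 < β ∧ Set.Finite {x : ℝ | ∃ n : ℕ, 1 ≤ n ∧ (betaT β)^[n] 1 = x}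

/-- `β` is a simple Parry number: Parry, and the orbit of `1` hits `0`. -/
def IsSimpleParry (β : ℝ) : Prop :=
  IsParry β ∧ ∃ n : ℕ, 1 ≤ n ∧ (betaT β)^[n] 1 = 0

/-- `β` is a Perron number: a real algebraic integer `β > 1` all of whose Galois
conjugates other than `β` itself have complex absolute value `< β`. -/
def IsPerron (β : ℝ) : Prop :=
  1 < β ∧ IsIntegral ℤ β ∧
    ∀ z : ℂ, Polynomial.aeval z (minpoly ℚ β) = 0 → z ≠ (β : ℂ) → ‖z‖ < β

/-- `β` is a Pisot number. -/
def IsPisot (β : ℝ) : Prop :=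
  1 < β ∧ IsIntegral ℤ β ∧
    ∀ z : ℂ, Polynomial.aeval z (minpoly ℚ β) = 0 → z ≠ (β : ℂ) → ‖z‖ < 1

/-- `β` is a Salem number. -/
def IsSalem (β : ℝ) : Prop :=
  1 < β ∧ IsIntegral ℤ β ∧
    (∀ z : ℂ, Polynomial.aeval z (minpoly ℚ β) = 0 → z ≠ (β : ℂ) → ‖z‖ ≤ 1) ∧
    (∃ z : ℂ, Polynomial.aeval z (minpoly ℚ β) = 0 ∧ ‖z‖ = 1)

/-- `β` has Parry order exactly `n`: if `n ≥ 1` then `β ^ n` is Parry, and no higher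
power of `β` is Parry. -/
def HasParryOrder (β : ℝ) (n : ℕ) : Prop :=
  (1 ≤ n → IsParry (β ^ n)) ∧ ∀ k : ℕ, n < k → ¬ IsParry (β ^ k)

/-- Mahler measure of an algebraic number `β`: product of `max 1 |α|` over the complex
roots `α` of the minimal polynomial of `β` over `ℚ`. -/
noncomputable def mahlerMeasureOf (β : ℝ) : ℝ :=
  (((minpoly ℚ β).map (algebraMap ℚ ℂ)).roots.map (fun z => max 1 ‖z‖)).prod

/-!
The map `β ↦ β ^ n` sends `H_n` into `H_1`: a conjugate of `β ^ n` is the `n`-th power of a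
conjugate of `β`, so `β ^ n` is again Perron, and `(β ^ n) ^ k = β ^ (n * k)` is Parry for
`k = 1` and not for `k > 1`. This map is continuous and injective on `[0, ∞) ⊇ H_n`, so an
accumulation point `x` of `H_n` would give the accumulation point `x ^ n` of `H_1`.
-/

open Filter Polynomial Set Topology

theorem AccPt.image_of_injOn {X Y : Type*} [TopologicalSpace X] [TopologicalSpace Y]
    {f : X → Y} {x : X} {S : Set X} (hx : AccPt x (𝓟 S)) (hf : ContinuousAt f x)
    (hinj : InjOn f (insert x S)) : AccPt (f x) (𝓟 (f '' S)) := by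
  rw [accPt_principal_iff_nhdsWithin] at hx ⊢
  have hmaps : MapsTo f (S \ {x}) (f '' S \ {f x}) := by
    rintro y ⟨hyS, hyx⟩
    refine ⟨mem_image_of_mem f hyS, fun hfy => hyx ?_⟩
    exact hinj (mem_insert_of_mem x hyS) (mem_insert x S) hfy
  exact (hx.map f).mono (hf.continuousWithinAt.tendsto_nhdsWithin hmaps)

open IntermediateField in
theorem exists_aeval_minpoly_eq_zero_pow_eq {K L A : Type*} [Field K] [Field L] [Field A]
    [Algebra K L] [Algebra K A] [IsAlgClosed A] {x : L} (hx : IsIntegral K x) (n : ℕ) {w : A}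
    (hw : aeval w (minpoly K (x ^ n)) = 0) :
    ∃ z : A, aeval z (minpoly K x) = 0 ∧ z ^ n = w := by
  have : FiniteDimensional K K⟮x⟯ := adjoin.finiteDimensional hx
  set b : K⟮x⟯ := AdjoinSimple.gen K x
  have hb : algebraMap K⟮x⟯ L b = x := rfl
  have hminb : minpoly K b = minpoly K x := by
    rw [← minpoly.algebraMap_eq (algebraMap K⟮x⟯ L).injective b, hb]
  have hminbn : minpoly K (b ^ n) = minpoly K (x ^ n) := by
    rw [← minpoly.algebraMap_eq (algebraMap K⟮x⟯ L).injective, map_pow, hb]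
  have hw' : w ∈ (minpoly K (b ^ n)).rootSet A := by
    rw [mem_rootSet, hminbn]
    exact ⟨minpoly.ne_zero (hx.pow n), hw⟩
  rw [← Algebra.IsAlgebraic.range_eval_eq_rootSet_minpoly A (b ^ n)] at hw'
  obtain ⟨ψ, hψ⟩ := hw'
  refine ⟨ψ b, ?_, by simp only [← hψ, map_pow]⟩
  rw [← hminb, aeval_algHom_apply, minpoly.aeval, map_zero]

theorem IsPerron.pow {β : ℝ} (hβ : IsPerron β) {n : ℕ} (hn : n ≠ 0) : IsPerron (β ^ n) := by
  obtain ⟨hβ1, hint, hconj⟩ := hβ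
  refine ⟨one_lt_pow₀ hβ1 hn, hint.pow n, fun w hw hwβ => ?_⟩
  obtain ⟨z, hz, rfl⟩ := exists_aeval_minpoly_eq_zero_pow_eq hint.tower_top n hw
  have hzβ : z ≠ β := by
    rintro rfl
    exact hwβ (by push_cast; rfl)
  rw [norm_pow]
  exact pow_lt_pow_left₀ (hconj z hz hzβ) (norm_nonneg z) hn

theorem HasParryOrder.pow {β : ℝ} {n m : ℕ} (h : HasParryOrder β (n * m)) (hn : n ≠ 0) :
    HasParryOrder (β ^ n) m := by
  refine ⟨fun hm => ?_, fun k hk => ?_⟩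
  · rw [← pow_mul]
    exact h.1 (Nat.one_le_iff_ne_zero.2 (mul_ne_zero hn (Nat.one_le_iff_ne_zero.1 hm)))
  · rw [← pow_mul]
    exact h.2 (n * k) (Nat.mul_lt_mul_of_pos_left hk (Nat.pos_of_ne_zero hn))

/-- If `H₁` has no accumulation point in `ℝ`, then every `H_n` (`n ≥ 1`) has no
accumulation point in `ℝ`. -/
theorem H_n_discrete_of_H_one_discrete
    (h : ∀ x : ℝ, ¬ AccPt x (Filter.principal {β : ℝ | IsPerron β ∧ HasParryOrder β 1})) :
    ∀ n : ℕ, 1 ≤ n →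
      ∀ x : ℝ, ¬ AccPt x (Filter.principal {β : ℝ | IsPerron β ∧ HasParryOrder β n}) := by
  intro n hn x hx
  set H := {β : ℝ | IsPerron β ∧ HasParryOrder β n}
  have hn0 : n ≠ 0 := Nat.one_le_iff_ne_zero.1 hn
  have hH : H ⊆ Ici 0 := fun β hβ => (zero_lt_one.trans hβ.1.1).le
  have hx0 : x ∈ Ici 0 :=
    closure_minimal hH isClosed_Ici (mem_closure_iff_clusterPt.2 hx.clusterPt)
  have hpow : (· ^ n) '' H ⊆ {β : ℝ | IsPerron β ∧ HasParryOrder β 1} := by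
    rintro _ ⟨β, ⟨hP, hO⟩, rfl⟩
    exact ⟨hP.pow hn0, HasParryOrder.pow (by rwa [mul_one]) hn0⟩
  refine h (x ^ n) ((hx.image_of_injOn (continuous_pow n).continuousAt ?_).mono
    (principal_mono.2 hpow))
  exact (pow_left_strictMonoOn₀ hn0).injOn.mono (insert_subset hx0 hH)
end

section
/- Let β be a Perron number of degree 3 over ℚ whose two Galois conjugates other than β are non-real complex conjugates γ and γ̄. If |γ| < 1, then β is a Pisot number. If |γ| > 1, then β^n is not a Parry number for any integer n ≥ 1, i.e. β has Parry order 0. -/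
/-! The conjugates of `β` are `β`, `γ`, `γ̄`, which settles the Pisot case. If `|γ| > 1`, every
conjugate `v ^ n` of `β ^ n` has modulus at least `1`, and `β ^ n`, `γ ^ n` are distinct
conjugates, so the constant term `N` of the minimal polynomial of `β ^ n` satisfies
`|N| ≥ β ^ n |γ| ^ n > β ^ n`. That rules out Parry (Boyd's criterion): for a Parry number `α`
the eventually periodic orbit of `1` under `T_α` yields an integer polynomial vanishing at `α`
whose constant term is a nonzero difference of two digits, hence of absolute value at most
`⌊α⌋`, and `N` divides it. -/
open Polynomial IntermediateField

noncomputable def betaDigit (β : ℝ) (k : ℕ) : ℤ := ⌊β * (betaT β)^[k] 1⌋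

/-- `betaDigitPoly β m = X ^ m - ∑ j < m, d j * X ^ (m - 1 - j)` for the digits `d j` of the
β-expansion of `1`. -/
noncomputable def betaDigitPoly (β : ℝ) : ℕ → ℤ[X]
  | 0 => 1
  | m + 1 => X * betaDigitPoly β m - C (betaDigit β m)

lemma betaT_iterate_succ_one (β : ℝ) (k : ℕ) :
    (betaT β)^[k + 1] 1 = β * (betaT β)^[k] 1 - betaDigit β k := by
  rw [Function.iterate_succ_apply']
  rfl

lemma betaT_iterate_succ_one_eq_fract (β : ℝ) (k : ℕ) :
    (betaT β)^[k + 1] 1 = Int.fract (β * (betaT β)^[k] 1) :=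
  betaT_iterate_succ_one β k

lemma betaT_iterate_one_mem_Icc (β : ℝ) (k : ℕ) : (betaT β)^[k] 1 ∈ Set.Icc (0 : ℝ) 1 := by
  cases k with
  | zero => simp
  | succ k =>
    rw [betaT_iterate_succ_one_eq_fract]
    exact ⟨Int.fract_nonneg _, (Int.fract_lt_one _).le⟩

lemma betaT_iterate_succ_one_lt_one (β : ℝ) (k : ℕ) : (betaT β)^[k + 1] 1 < 1 := by
  rw [betaT_iterate_succ_one_eq_fract]
  exact Int.fract_lt_one _

lemma betaDigit_mem_Icc {β : ℝ} (hβ : 0 ≤ β) (k : ℕ) : betaDigit β k ∈ Set.Icc 0 ⌊β⌋ := by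
  obtain ⟨h0, h1⟩ := betaT_iterate_one_mem_Icc β k
  exact ⟨Int.floor_nonneg.2 (mul_nonneg hβ h0),
    Int.floor_le_floor (mul_le_of_le_one_right hβ h1)⟩

lemma aeval_betaDigitPoly (β : ℝ) (m : ℕ) : aeval β (betaDigitPoly β m) = (betaT β)^[m] 1 := by
  induction m with
  | zero => simp [betaDigitPoly]
  | succ m ih => simp [betaDigitPoly, ih, betaT_iterate_succ_one]

lemma betaDigitPoly_coeff_zero (β : ℝ) (m : ℕ) :
    (betaDigitPoly β (m + 1)).coeff 0 = -betaDigit β m := by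
  simp [betaDigitPoly]

lemma exists_betaT_iterate_eq_of_isParry {β : ℝ} (h : IsParry β) :
    ∃ p q : ℕ, 0 < q ∧ (betaT β)^[p + 1 + q] 1 = (betaT β)^[p + 1] 1 := by
  have hmem (k : ℕ) : (betaT β)^[k + 1] 1 ∈ {x : ℝ | ∃ n : ℕ, 1 ≤ n ∧ (betaT β)^[n] 1 = x} :=
    ⟨k + 1, by omega, rfl⟩
  obtain ⟨a, b, hab, heq⟩ := h.2.exists_lt_map_eq_of_forall_mem hmem
  exact ⟨a, b - a, by omega, by rw [show a + 1 + (b - a) = b + 1 by omega]; exact heq.symm⟩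

lemma exists_betaT_period_of_isParry {β : ℝ} (h : IsParry β) :
    ∃ p q : ℕ, 0 < q ∧ (betaT β)^[p + 1 + q] 1 = (betaT β)^[p + 1] 1 ∧
      betaDigit β p ≠ betaDigit β (p + q) := by
  classical
  have hex := exists_betaT_iterate_eq_of_isParry h
  obtain ⟨q, hq, hper⟩ := Nat.find_spec hex
  refine ⟨Nat.find hex, q, hq, hper, fun hdig => ?_⟩
  -- With equal digits, cancelling `β` lets the period start one step before the minimal one.
  have hprev : (betaT β)^[Nat.find hex + q] 1 = (betaT β)^[Nat.find hex] 1 := by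
    rw [show Nat.find hex + 1 + q = Nat.find hex + q + 1 by ring, betaT_iterate_succ_one,
      betaT_iterate_succ_one, hdig] at hper
    exact mul_left_cancel₀ (zero_lt_one.trans h.1).ne' (by linarith)
  rcases hp : Nat.find hex with _ | p
  · rw [hp, zero_add, Function.iterate_zero_apply] at hprev
    obtain ⟨q', rfl⟩ := Nat.exists_eq_succ_of_ne_zero hq.ne'
    exact (betaT_iterate_succ_one_lt_one β q').ne hprev
  · rw [hp] at hprev
    exact Nat.find_min hex (by omega : p < Nat.find hex) ⟨q, hq, hprev⟩

theorem not_isParry_of_lt_abs_minpoly_coeff_zero {β : ℝ} (hβ : IsIntegral ℤ β)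
    (hlt : β < |((minpoly ℤ β).coeff 0 : ℝ)|) : ¬ IsParry β := by
  intro hP
  obtain ⟨p, q, hq, hper, hdig⟩ := exists_betaT_period_of_isParry hP
  set R := betaDigitPoly β (p + q + 1) - betaDigitPoly β (p + 1)
  have hR : aeval β R = 0 := by
    simp [R, aeval_betaDigitPoly, ← hper, show p + 1 + q = p + q + 1 by ring]
  have hR0 : R.coeff 0 = betaDigit β p - betaDigit β (p + q) := by
    simp only [R, coeff_sub, betaDigitPoly_coeff_zero]
    ring
  have hdvd : (minpoly ℤ β).coeff 0 ∣ R.coeff 0 := by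
    simpa only [coeff_zero_eq_eval_zero] using eval_dvd (minpoly.isIntegrallyClosed_dvd hβ hR)
  have hβ0 : 0 ≤ β := by linarith [hP.1]
  obtain ⟨h₁, h₁'⟩ := betaDigit_mem_Icc hβ0 p
  obtain ⟨h₂, h₂'⟩ := betaDigit_mem_Icc hβ0 (p + q)
  have hle : |(minpoly ℤ β).coeff 0| ≤ ⌊β⌋ := by
    have hR0ne : R.coeff 0 ≠ 0 := hR0 ▸ sub_ne_zero.2 hdig
    refine (Int.le_of_dvd (abs_pos.2 hR0ne) ((abs_dvd_abs _ _).2 hdvd)).trans ?_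
    rw [hR0, abs_le]
    constructor <;> omega
  have : |((minpoly ℤ β).coeff 0 : ℝ)| ≤ β := by
    rw [← Int.cast_abs]
    exact (Int.cast_le.2 hle).trans (Int.floor_le β)
  linarith

open ComplexConjugate in
lemma aroots_minpoly_eq_of_natDegree_eq_three {β : ℝ} (hβ : IsIntegral ℚ β)
    (hdeg : (minpoly ℚ β).natDegree = 3) {γ : ℂ} (him : γ.im ≠ 0)
    (hγ : aeval γ (minpoly ℚ β) = 0) :
    (minpoly ℚ β).aroots ℂ = {(β : ℂ), γ, conj γ} := by
  have hmem {z : ℂ} (hz : aeval z (minpoly ℚ β) = 0) : z ∈ (minpoly ℚ β).aroots ℂ :=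
    mem_aroots.2 ⟨minpoly.ne_zero hβ, hz⟩
  have hβroot : aeval (β : ℂ) (minpoly ℚ β) = 0 := by
    rw [← Complex.coe_algebraMap, aeval_algebraMap_apply, minpoly.aeval, map_zero]
  have hconj : aeval (conj γ) (minpoly ℚ β) = 0 := by
    rw [← aeval_map_algebraMap ℝ, aeval_conj, aeval_map_algebraMap, hγ, map_zero]
  have hnodup : ({(β : ℂ), γ, conj γ} : Multiset ℂ).Nodup := by
    have h₁ : (β : ℂ) ≠ γ := fun h => him (by simp [← h])
    have h₂ : (β : ℂ) ≠ conj γ := fun h => him (by simpa using congrArg Complex.im h.symm)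
    have h₃ : γ ≠ conj γ := fun h => him (by linarith [congrArg Complex.im h, Complex.conj_im γ])
    simp [h₁, h₂, h₃]
  refine (Multiset.eq_of_le_of_card_le ((Multiset.le_iff_subset hnodup).2 ?_) ?_).symm
  · simp [Multiset.insert_eq_cons, Multiset.cons_subset, hmem hβroot, hmem hγ, hmem hconj]
  · simp [IsAlgClosed.card_aroots_eq_natDegree, hdeg]

lemma rootSet_minpoly_pow {L : Type*} [Field L] [CharZero L] {x : L} (hx : IsIntegral ℚ x)
    (n : ℕ) : (minpoly ℚ (x ^ n)).rootSet ℂ = (· ^ n) '' (minpoly ℚ x).rootSet ℂ := by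
  have : FiniteDimensional ℚ ℚ⟮x⟯ := IntermediateField.adjoin.finiteDimensional hx
  have : NumberField ℚ⟮x⟯ := ⟨⟩
  have hmin (y : ℚ⟮x⟯) : minpoly ℚ (algebraMap ℚ⟮x⟯ L y) = minpoly ℚ y :=
    minpoly.algebraMap_eq (algebraMap ℚ⟮x⟯ L).injective y
  rw [← AdjoinSimple.algebraMap_gen ℚ x, ← map_pow, hmin, hmin,
    ← NumberField.Embeddings.range_eval_eq_rootSet_minpoly,
    ← NumberField.Embeddings.range_eval_eq_rootSet_minpoly, ← Set.range_comp]
  simp only [Function.comp_def, map_pow]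

lemma abs_minpoly_coeff_zero_eq_prod_norm_aroots {L : Type*} [Field L] [Algebra ℚ L] {x : L}
    (hx : IsIntegral ℤ x) :
    |((minpoly ℤ x).coeff 0 : ℝ)| = (((minpoly ℚ x).aroots ℂ).map (‖·‖)).prod := by
  set f := (minpoly ℚ x).map (algebraMap ℚ ℂ)
  have hmonic : f.Monic := (minpoly.monic hx.tower_top).map _
  have hint : (minpoly ℚ x).coeff 0 = (minpoly ℤ x).coeff 0 := by
    rw [minpoly.isIntegrallyClosed_eq_field_fractions' ℚ hx, coeff_map, eq_intCast]
  have hcoeff := (IsAlgClosed.splits f).coeff_zero_eq_prod_roots_of_monic hmonic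
  rw [coeff_map, hint, map_intCast] at hcoeff
  rw [← Complex.norm_intCast, hcoeff, norm_mul, norm_pow, norm_neg, norm_one, one_pow, one_mul,
    aroots_def]
  exact map_multiset_prod (normHom : ℂ →*₀ ℝ) _

lemma norm_mul_norm_le_prod_map_norm {E : Type*} [Norm E] {s : Multiset E} {a b : E}
    (hab : a ≠ b) (ha : a ∈ s) (hb : b ∈ s) (h1 : ∀ z ∈ s, 1 ≤ ‖z‖) :
    ‖a‖ * ‖b‖ ≤ (s.map (‖·‖)).prod := by
  classical
  obtain ⟨t, rfl⟩ := Multiset.exists_cons_of_mem ha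
  obtain ⟨u, rfl⟩ := Multiset.exists_cons_of_mem ((Multiset.mem_cons.1 hb).resolve_left hab.symm)
  have hu : 1 ≤ (u.map (‖·‖)).prod :=
    Multiset.one_le_prod_map fun z hz => h1 z (by simp [hz])
  simp only [Multiset.map_cons, Multiset.prod_cons, ← mul_assoc]
  exact le_mul_of_one_le_right (by nlinarith [h1 a (by simp), h1 b (by simp)]) hu

lemma ofReal_mem_aroots_minpoly {x : ℝ} (hx : IsIntegral ℚ x) :
    (x : ℂ) ∈ (minpoly ℚ x).aroots ℂ :=
  mem_aroots.2 ⟨minpoly.ne_zero hx, by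
    rw [← Complex.coe_algebraMap, aeval_algebraMap_apply, minpoly.aeval, map_zero]⟩

lemma lt_abs_minpoly_coeff_zero_of_one_le_norm {x : ℝ} (hx : IsIntegral ℤ x) (hx0 : 0 < x)
    (h1 : ∀ z ∈ (minpoly ℚ x).aroots ℂ, 1 ≤ ‖z‖) {w : ℂ} (hw : w ∈ (minpoly ℚ x).aroots ℂ)
    (hwx : w ≠ x) (hw1 : 1 < ‖w‖) : x < |((minpoly ℤ x).coeff 0 : ℝ)| := by
  rw [abs_minpoly_coeff_zero_eq_prod_norm_aroots hx]
  calc x < x * ‖w‖ := lt_mul_of_one_lt_right hx0 hw1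
    _ = ‖(x : ℂ)‖ * ‖w‖ := by rw [Complex.norm_real, Real.norm_of_nonneg hx0.le]
    _ ≤ _ := norm_mul_norm_le_prod_map_norm hwx.symm (ofReal_mem_aroots_minpoly hx.tower_top) hw h1

open ComplexConjugate in
lemma lt_abs_minpoly_pow_coeff_zero {β : ℝ} (hβ : IsPerron β)
    (hdeg : (minpoly ℚ β).natDegree = 3) {γ : ℂ} (him : γ.im ≠ 0)
    (hroot : aeval γ (minpoly ℚ β) = 0) (hγ : 1 < ‖γ‖) {n : ℕ} (hn : n ≠ 0) :
    β ^ n < |((minpoly ℤ (β ^ n)).coeff 0 : ℝ)| := by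
  have hβℚ : IsIntegral ℚ β := hβ.2.1.tower_top
  have hroots := aroots_minpoly_eq_of_natDegree_eq_three hβℚ hdeg him hroot
  have hpow {z : ℂ} :
      z ∈ (minpoly ℚ (β ^ n)).aroots ℂ ↔ ∃ v ∈ (minpoly ℚ β).aroots ℂ, v ^ n = z := by
    have hmem {p : ℚ[X]} {z : ℂ} : z ∈ p.aroots ℂ ↔ z ∈ p.rootSet ℂ :=
      mem_aroots'.trans mem_rootSet'.symm
    simp only [hmem, rootSet_minpoly_pow hβℚ, Set.mem_image]
  have hβ0 : 0 < β := zero_lt_one.trans hβ.1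
  have hγβ : ‖γ‖ < β := hβ.2.2 γ hroot fun h => him (by simp [h])
  refine lt_abs_minpoly_coeff_zero_of_one_le_norm (hβ.2.1.pow n) (pow_pos hβ0 n)
    (fun z hz => ?_) (hpow.2 ⟨γ, by simp [hroots], rfl⟩) (fun h => ?_)
    (by simpa using one_lt_pow₀ hγ hn)
  · obtain ⟨v, hv, rfl⟩ := hpow.1 hz
    rw [hroots] at hv
    have hv1 : 1 ≤ ‖v‖ := by
      rcases (by simpa using hv : v = β ∨ v = γ ∨ v = conj γ) with rfl | rfl | rfl
      · simp [abs_of_pos hβ0, hβ.1.le]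
      · exact hγ.le
      · simpa using hγ.le
    simpa using one_le_pow₀ hv1
  · have := congrArg norm h
    simp only [norm_pow, Complex.ofReal_pow, Complex.norm_real, Real.norm_eq_abs,
      abs_of_pos hβ0] at this
    exact (pow_lt_pow_left₀ hγβ (norm_nonneg γ) hn).ne this

/-- A cubic Perron number with a non-real conjugate `γ`: if `|γ| < 1` it is Pisot,
and if `|γ| > 1` then no positive power of it is Parry. -/
theorem cubic_complex_conjugates (β : ℝ) (hβ : IsPerron β)
    (hdeg : (minpoly ℚ β).natDegree = 3)
    (γ : ℂ) (him : γ.im ≠ 0) (hroot : Polynomial.aeval γ (minpoly ℚ β) = 0) :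
    (‖γ‖ < 1 → IsPisot β) ∧
    (1 < ‖γ‖ → ∀ n : ℕ, 1 ≤ n → ¬ IsParry (β ^ n)) := by
  have hroots := aroots_minpoly_eq_of_natDegree_eq_three hβ.2.1.tower_top hdeg him hroot
  refine ⟨fun hγ => ⟨hβ.1, hβ.2.1, fun z hz hzβ => ?_⟩, fun hγ n hn => ?_⟩
  · have hz' : z ∈ (minpoly ℚ β).aroots ℂ := mem_aroots.2 ⟨minpoly.ne_zero hβ.2.1.tower_top, hz⟩
    rw [hroots] at hz'
    rcases (by simpa [hzβ] using hz' : z = γ ∨ z = (starRingEnd ℂ) γ) with rfl | rfl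
    · exact hγ
    · simpa using hγ
  · exact not_isParry_of_lt_abs_minpoly_coeff_zero (hβ.2.1.pow n)
      (lt_abs_minpoly_pow_coeff_zero hβ hdeg him hroot hγ (by omega))
end
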